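/- arXiv:0802.0195 — 2 statements merged into one kernel-verified Lean document; each statement's English description precedes it below -/
import Mathlib

section
/- Izergin's determinant formula agrees with the permutation-sum formula for the 6-vertex DWBC partition function: for every n ≥ 1, all q ∈ ℂ with q ≠ 0 and q² ≠ 1, and all z_1,…,z_n, w_1,…,w_n ∈ ℂ such that the z_i are pairwise distinct, the w_j are pairwise distinct, z_i − w_j ≠ 0 and qz_i − q⁻¹w_j ≠ 0 for all i,j, and q⁻¹w_i − qw_j ≠ 0 for all i ≠ j, one has: (q−q⁻¹)^n ∏_{m=1}^n w_m · [∏_{i,j=1}^n (z_i−w_j)(qz_i−q⁻¹w_j)] / [∏_{n≥i>j≥1} (z_i−z_j)(w_j−w_i)] · det( 1/((z_i−w_j)(qz_i−q⁻¹w_j)) )_{1≤i,j≤n} = (q−q⁻¹)^n ∏_{m=1}^n w_m · ∏_{n≥i>j≥1} [(q⁻¹w_i−qw_j)/(w_i−w_j)] · Σ_{σ∈S_n} ( ∏_{i<j with σ(i)>σ(j)} [(qw_{σ(i)}−q⁻¹w_{σ(j)})/(q⁻¹w_{σ(i)}−qw_{σ(j)})] · ∏_{n≥i>k≥1} (qz_i−q⁻¹w_{σ(k)})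 · ∏_{1≤i<k≤n} (z_i−w_{σ(k)}) ). -/
open Complex BigOperators

noncomputable section

namespace AuxIz

open Finset Polynomial

variable {R : Type*} [CommRing R] {S : Type*} [CommRing S]

/-- entry matrix for P -/
def pmat (n : ℕ) (q q' : R) (z w : Fin n → R) : Matrix (Fin n) (Fin n) R :=
  Matrix.of fun i j => ∏ j' ∈ Finset.univ.erase j, ((z i - w j') * (q * z i - q' * w j'))

def Pf (n : ℕ) (q q' : R) (z w : Fin n → R) : R := (pmat n q q' z w).det

def Df (n : ℕ) (z : Fin n → R) : R := ∏ i, ∏ j, if j < i then z i - z j else 1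

def Nf (n : ℕ) (q q' : R) (w : Fin n → R) (σ : Equiv.Perm (Fin n)) : R :=
  ∏ a, ∏ b, if b < a then
    (if σ⁻¹ a < σ⁻¹ b then q * w a - q' * w b else q' * w a - q * w b) else 1

def Gf (n : ℕ) (q q' : R) (z w : Fin n → R) (σ : Equiv.Perm (Fin n)) : R :=
  (∏ i, ∏ k, if k < i then q * z i - q' * w (σ k) else 1) *
  (∏ i, ∏ k, if i < k then z i - w (σ k) else 1)

def Sf (n : ℕ) (q q' : R) (z w : Fin n → R) : R :=
  ∑ σ : Equiv.Perm (Fin n), Nf n q q' w σ * Gf n q q' z w σ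

theorem map_Pf (f : R →+* S) (n : ℕ) (q q' : R) (z w : Fin n → R) :
    f (Pf n q q' z w) = Pf n (f q) (f q') (f ∘ z) (f ∘ w) := by
  rw [Pf, RingHom.map_det, Pf]
  congr 1
  ext i j
  simp [pmat, map_prod]

theorem map_Df (f : R →+* S) (n : ℕ) (z : Fin n → R) :
    f (Df n z) = Df n (f ∘ z) := by
  simp [Df, map_prod, apply_ite f]

theorem map_Nf (f : R →+* S) (n : ℕ) (q q' : R) (w : Fin n → R) (σ : Equiv.Perm (Fin n)) :
    f (Nf n q q' w σ) = Nf n (f q) (f q') (f ∘ w) σ := by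
  simp [Nf, map_prod, apply_ite f]

theorem map_Gf (f : R →+* S) (n : ℕ) (q q' : R) (z w : Fin n → R) (σ : Equiv.Perm (Fin n)) :
    f (Gf n q q' z w σ) = Gf n (f q) (f q') (f ∘ z) (f ∘ w) σ := by
  simp [Gf, map_prod, apply_ite f]

theorem map_Sf (f : R →+* S) (n : ℕ) (q q' : R) (z w : Fin n → R) :
    f (Sf n q q' z w) = Sf n (f q) (f q') (f ∘ z) (f ∘ w) := by
  simp [Sf, map_sum, map_Nf, map_Gf]

theorem prod_erase_succAbove {R : Type*} [CommMonoid R] {n : ℕ} (g : Fin (n+1) → R) (j : Fin (n+1)) (k : Fin n) :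
    ∏ x ∈ Finset.univ.erase (j.succAbove k), g x
      = g j * ∏ x ∈ Finset.univ.erase k, g (j.succAbove x) := by
  have hset : Finset.univ.erase (j.succAbove k)
      = insert j ((Finset.univ.erase k).image j.succAbove) := by
    ext x
    simp only [mem_erase, mem_univ, and_true, mem_insert, mem_image]
    constructor
    · intro hx
      rcases eq_or_ne x j with rfl | hxj
      · exact Or.inl rfl
      · obtain ⟨m, hm⟩ := Fin.exists_succAbove_eq hxj
        exact Or.inr ⟨m, fun h => hx (by rw [← hm, h]), hm⟩
    · rintro (rfl | ⟨m, hmk, hm⟩)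
      · exact (Fin.succAbove_ne x k).symm
      · rw [← hm]
        exact fun h => hmk (Fin.succAbove_right_injective h)
  have hnotmem : j ∉ (Finset.univ.erase k).image j.succAbove := by
    simp only [mem_image, mem_erase]
    rintro ⟨m, -, hm⟩
    exact Fin.succAbove_ne j m hm
  rw [hset, prod_insert hnotmem, prod_image (fun a _ b _ h => Fin.succAbove_right_injective h)]

theorem Pf_cons (n : ℕ) (q q' : R) (z' : Fin n → R) (w : Fin (n+1) → R) (j : Fin (n+1)) :
    Pf (n+1) q q' (Fin.cons (w j) z') w
      = (-1 : R) ^ (j : ℕ)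
        * (∏ j' ∈ Finset.univ.erase j, ((w j - w j') * (q * w j - q' * w j')))
        * ((∏ i, ((z' i - w j) * (q * z' i - q' * w j)))
          * Pf n q q' z' (w ∘ j.succAbove)) := by
  rw [Pf, Matrix.det_succ_row_zero]
  rw [Finset.sum_eq_single_of_mem j (Finset.mem_univ j)]
  · have h1 : pmat (n+1) q q' (Fin.cons (w j) z') w 0 j
        = ∏ j' ∈ Finset.univ.erase j, ((w j - w j') * (q * w j - q' * w j')) := by
      simp [pmat]
    have h2 : ((pmat (n+1) q q' (Fin.cons (w j) z') w).submatrix Fin.succ j.succAbove).det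
        = (∏ i, ((z' i - w j) * (q * z' i - q' * w j))) * Pf n q q' z' (w ∘ j.succAbove) := by
      have hsub : (pmat (n+1) q q' (Fin.cons (w j) z') w).submatrix Fin.succ j.succAbove
          = Matrix.of fun i k => ((z' i - w j) * (q * z' i - q' * w j))
              * pmat n q q' z' (w ∘ j.succAbove) i k := by
        ext i k
        simp only [Matrix.submatrix_apply, pmat, Matrix.of_apply, Fin.cons_succ]
        rw [prod_erase_succAbove (fun j'' => (z' i - w j'') * (q * z' i - q' * w j'')) j k]
        rfl
      rw [hsub, Matrix.det_mul_column]
      rfl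
    rw [h1, h2]
    try ring
  · intro b _ hbj
    have hzero : pmat (n+1) q q' (Fin.cons (w j) z') w 0 b = 0 := by
      apply Finset.prod_eq_zero (Finset.mem_erase.mpr ⟨hbj.symm, Finset.mem_univ j⟩)
      simp
    rw [hzero]
    ring

theorem Df_cons (n : ℕ) (x : R) (z' : Fin n → R) :
    Df (n+1) (Fin.cons x z') = (∏ i, (z' i - x)) * Df n z' := by
  rw [Df, Fin.prod_univ_succ]
  have h0 : (∏ j : Fin (n+1), if j < (0 : Fin (n+1)) then (Fin.cons x z' : Fin (n+1) → R) 0 - (Fin.cons x z' : Fin (n+1) → R) j else 1) = 1 := by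
    apply Finset.prod_eq_one
    intro j _
    simp [Fin.not_lt_zero]
  rw [h0, one_mul]
  have h1 : ∀ i : Fin n, (∏ j : Fin (n+1), if j < i.succ then (Fin.cons x z' : Fin (n+1) → R) i.succ - (Fin.cons x z' : Fin (n+1) → R) j else 1)
      = (z' i - x) * ∏ j : Fin n, if j < i then z' i - z' j else 1 := by
    intro i
    rw [Fin.prod_univ_succ]
    congr 1
    · apply Finset.prod_congr rfl
      intro j _
      simp [Fin.succ_lt_succ_iff]
  rw [Finset.prod_congr rfl fun i _ => h1 i, Finset.prod_mul_distrib, Df]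

/-- insertion of a value `j` at position `0` into a permutation -/
def ins (n : ℕ) (j : Fin (n+1)) (s : Equiv.Perm (Fin n)) : Equiv.Perm (Fin (n+1)) :=
  (finSuccEquiv' 0).trans ((Equiv.optionCongr s).trans (finSuccEquiv' j).symm)

@[simp] theorem ins_zero (n : ℕ) (j : Fin (n+1)) (s : Equiv.Perm (Fin n)) :
    ins n j s 0 = j := by
  simp [ins, finSuccEquiv'_at]

@[simp] theorem ins_succ (n : ℕ) (j : Fin (n+1)) (s : Equiv.Perm (Fin n)) (k : Fin n) :
    ins n j s k.succ = j.succAbove (s k) := by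
  have : (finSuccEquiv' (0 : Fin (n+1))) k.succ = some k := by
    rw [← Fin.zero_succAbove, finSuccEquiv'_succAbove]
  simp [ins, this]

@[simp] theorem ins_inv_j (n : ℕ) (j : Fin (n+1)) (s : Equiv.Perm (Fin n)) :
    (ins n j s)⁻¹ j = 0 := by
  apply Equiv.injective (ins n j s)
  simp

@[simp] theorem ins_inv_succAbove (n : ℕ) (j : Fin (n+1)) (s : Equiv.Perm (Fin n)) (a : Fin n) :
    (ins n j s)⁻¹ (j.succAbove a) = (s⁻¹ a).succ := by
  apply Equiv.injective (ins n j s)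
  simp

theorem sum_perm_reduce {M : Type*} [AddCommMonoid M] (n : ℕ) (j : Fin (n+1))
    (F : Equiv.Perm (Fin (n+1)) → M) (hvanish : ∀ σ, σ 0 ≠ j → F σ = 0) :
    ∑ σ : Equiv.Perm (Fin (n+1)), F σ = ∑ s : Equiv.Perm (Fin n), F (ins n j s) := by
  classical
  rw [← Finset.sum_filter_of_ne (p := fun σ : Equiv.Perm (Fin (n+1)) => σ 0 = j)
      (fun σ _ h => by by_contra hc; exact h (hvanish σ hc))]
  symm
  apply Finset.sum_bij (i := fun s (_ : s ∈ Finset.univ) => ins n j s)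
  · intro s _
    simp
  · intro s1 _ s2 _ h
    ext k
    have h2 : j.succAbove (s1 k) = j.succAbove (s2 k) := by
      have := congrArg (fun σ : Equiv.Perm (Fin (n+1)) => σ k.succ) h
      simpa using this
    exact congrArg Fin.val (Fin.succAbove_right_injective h2)
  · intro σ hσ
    have hσ0 : σ 0 = j := (Finset.mem_filter.mp hσ).2
    set e : Option (Fin n) ≃ Option (Fin n) :=
      (finSuccEquiv' (0 : Fin (n+1))).symm.trans (σ.trans (finSuccEquiv' j)) with he
    refine ⟨Equiv.removeNone e, Finset.mem_univ _, ?_⟩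
    ext x
    induction x using Fin.cases with
    | zero => simp [hσ0]
    | succ k =>
      rw [ins_succ]
      have hne : σ k.succ ≠ j := by
        intro h
        exact (Fin.succ_ne_zero k) (σ.injective (h.trans hσ0.symm))
      obtain ⟨m, hm⟩ := Fin.exists_succAbove_eq hne
      have hek : e (some k) = some m := by
        rw [he]
        simp only [Equiv.trans_apply, finSuccEquiv'_symm_some]
        rw [Fin.zero_succAbove, ← hm, finSuccEquiv'_succAbove]
      have := Equiv.removeNone_some e ⟨m, hek⟩
      rw [hek] at this
      rw [Option.some_inj.mp this, hm]
  · intro s _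
    rfl

theorem Nf_ins (n : ℕ) (q q' : R) (w : Fin (n+1) → R) (j : Fin (n+1)) (s : Equiv.Perm (Fin n)) :
    Nf (n+1) q q' w (ins n j s)
      = (∏ b : Fin n, if j.succAbove b < j then q * w j - q' * w (j.succAbove b) else 1)
        * ((∏ a : Fin n, if j < j.succAbove a then q' * w (j.succAbove a) - q * w j else 1)
        * Nf n q q' (w ∘ j.succAbove) s) := by
  rw [Nf, Fin.prod_univ_succAbove _ j]
  congr 1
  · -- a = j term
    rw [Fin.prod_univ_succAbove _ j]
    rw [if_neg (lt_irrefl j)]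
    rw [one_mul]
    apply Finset.prod_congr rfl
    intro b _
    rcases lt_or_ge (j.succAbove b) j with h | h
    · rw [if_pos h, if_pos h, if_pos]
      rw [ins_inv_j, ins_inv_succAbove]
      exact Fin.succ_pos _
    · rw [if_neg (not_lt.mpr h), if_neg (not_lt.mpr h)]
  · -- remaining a = succAbove a'
    rw [Nf, ← Finset.prod_mul_distrib]
    apply Finset.prod_congr rfl
    intro a _
    rw [Fin.prod_univ_succAbove _ j]
    congr 1
    · rcases lt_or_ge j (j.succAbove a) with h | h
      · rw [if_pos h, if_pos h, if_neg]
        rw [ins_inv_j, ins_inv_succAbove]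
        exact Fin.not_lt_zero _
      · rw [if_neg (not_lt.mpr h), if_neg (not_lt.mpr h)]
    · apply Finset.prod_congr rfl
      intro b _
      simp only [ins_inv_succAbove, Fin.succAbove_lt_succAbove_iff, Fin.succ_lt_succ_iff,
        Function.comp_apply]

theorem Gf_ins (n : ℕ) (q q' : R) (x : R) (z' : Fin n → R) (w : Fin (n+1) → R)
    (j : Fin (n+1)) (s : Equiv.Perm (Fin n)) :
    Gf (n+1) q q' (Fin.cons x z') w (ins n j s)
      = ((∏ i, (q * z' i - q' * w j)) * (∏ k, (x - w (j.succAbove k))))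
        * Gf n q q' z' (w ∘ j.succAbove) s := by
  rw [Gf, Gf]
  have ha : (∏ i : Fin (n+1), ∏ k : Fin (n+1),
        if k < i then q * (Fin.cons x z' : Fin (n+1) → R) i - q' * w (ins n j s k) else 1)
      = (∏ i, (q * z' i - q' * w j)) *
        (∏ i, ∏ k, if k < i then q * z' i - q' * (w ∘ j.succAbove) (s k) else 1) := by
    rw [Fin.prod_univ_succ]
    have h0 : (∏ k : Fin (n+1), if k < (0:Fin (n+1)) then q * (Fin.cons x z' : Fin (n+1) → R) 0 - q' * w (ins n j s k) else 1) = 1 :=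
      Finset.prod_eq_one fun k _ => if_neg (Fin.not_lt_zero k)
    rw [h0, one_mul, ← Finset.prod_mul_distrib]
    apply Finset.prod_congr rfl
    intro i _
    rw [Fin.prod_univ_succ]
    congr 1
    · apply Finset.prod_congr rfl
      intro k _
      simp [Fin.succ_lt_succ_iff]
  have hb : (∏ i : Fin (n+1), ∏ k : Fin (n+1),
        if i < k then (Fin.cons x z' : Fin (n+1) → R) i - w (ins n j s k) else 1)
      = (∏ k, (x - w (j.succAbove k))) *
        (∏ i, ∏ k, if i < k then z' i - (w ∘ j.succAbove) (s k) else 1) := by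
    rw [Fin.prod_univ_succ]
    have h0 : (∏ k : Fin (n+1), if (0:Fin (n+1)) < k then (Fin.cons x z' : Fin (n+1) → R) 0 - w (ins n j s k) else 1)
        = ∏ k, (x - w (j.succAbove k)) := by
      rw [Fin.prod_univ_succ, if_neg (lt_irrefl _), one_mul]
      rw [← Equiv.prod_comp s (fun k => x - w (j.succAbove k))]
      apply Finset.prod_congr rfl
      intro k _
      rw [if_pos (Fin.succ_pos k)]
      simp
    rw [h0]
    congr 1
    apply Finset.prod_congr rfl
    intro i _
    rw [Fin.prod_univ_succ, if_neg (Fin.not_lt_zero _), one_mul]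
    apply Finset.prod_congr rfl
    intro k _
    simp [Fin.succ_lt_succ_iff]
  rw [ha, hb]
  ring

theorem Sf_cons (n : ℕ) (q q' : R) (z' : Fin n → R) (w : Fin (n+1) → R) (j : Fin (n+1)) :
    Sf (n+1) q q' (Fin.cons (w j) z') w
      = ((∏ b : Fin n, if j.succAbove b < j then q * w j - q' * w (j.succAbove b) else 1)
          * (∏ a : Fin n, if j < j.succAbove a then q' * w (j.succAbove a) - q * w j else 1))
        * (((∏ i, (q * z' i - q' * w j)) * (∏ k, (w j - w (j.succAbove k))))
          * Sf n q q' z' (w ∘ j.succAbove)) := by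
  rw [Sf]
  rw [sum_perm_reduce n j _ ?vanish]
  case vanish =>
    intro σ hσ
    have hinv : σ⁻¹ j ≠ 0 := by
      intro h
      exact hσ (by rw [← h, Equiv.Perm.coe_inv, Equiv.apply_symm_apply])
    apply mul_eq_zero_of_right
    apply mul_eq_zero_of_right
    apply Finset.prod_eq_zero (Finset.mem_univ (0 : Fin (n+1)))
    apply Finset.prod_eq_zero (Finset.mem_univ (σ⁻¹ j))
    rw [if_pos (Fin.pos_of_ne_zero hinv)]
    simp
  have hterm : ∀ s : Equiv.Perm (Fin n),
      Nf (n+1) q q' w (ins n j s) * Gf (n+1) q q' (Fin.cons (w j) z') w (ins n j s)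
      = (((∏ b : Fin n, if j.succAbove b < j then q * w j - q' * w (j.succAbove b) else 1)
          * (∏ a : Fin n, if j < j.succAbove a then q' * w (j.succAbove a) - q * w j else 1))
        * ((∏ i, (q * z' i - q' * w j)) * (∏ k, (w j - w (j.succAbove k)))))
        * (Nf n q q' (w ∘ j.succAbove) s * Gf n q q' z' (w ∘ j.succAbove) s) := by
    intro s
    rw [Nf_ins, Gf_ins]
    ring
  rw [Finset.sum_congr rfl fun s _ => hterm s, ← Finset.mul_sum, Sf]
  ring

theorem succAbove_lt_iff_coe (n : ℕ) (j : Fin (n+1)) (b : Fin n) :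
    j.succAbove b < j ↔ (b : ℕ) < (j : ℕ) := by
  rw [Fin.succAbove]
  split
  · rename_i h
    rw [Fin.lt_def] at h ⊢
    simpa using h
  · rename_i h
    rw [Fin.lt_def] at h ⊢
    simp only [Fin.coe_castSucc, not_lt] at h
    simp only [Fin.val_succ]
    omega

theorem card_not_lt (n : ℕ) (j : Fin (n+1)) :
    (Finset.univ.filter (fun b : Fin n => ¬ ((b:ℕ) < (j:ℕ)))).card = n - (j:ℕ) := by
  have h : (Finset.univ.filter (fun b : Fin n => ¬ ((b:ℕ) < (j:ℕ)))).card
      = ((Finset.range n).filter (fun b => ¬ (b < (j:ℕ)))).card := by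
    refine Finset.card_bij (fun b _ => (b : ℕ)) ?_ ?_ ?_
    · intro b hb; simp at hb ⊢; omega
    · intro b1 _ b2 _ h; exact Fin.ext h
    · intro b hb
      simp at hb
      exact ⟨⟨b, hb.1⟩, by simp; omega, rfl⟩
  rw [h, Finset.filter_not, Finset.card_sdiff_of_subset (Finset.filter_subset _ _), Finset.card_range]
  congr 1
  have h2 : (Finset.range n).filter (fun b => b < (j:ℕ)) = Finset.range (min (j:ℕ) n) := by
    ext x; simp; omega
  rw [h2, Finset.card_range]
  omega

theorem pref_sign (n : ℕ) (j : Fin (n+1)) (f : Fin (n+1) → R) :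
    (∏ b : Fin n, if j.succAbove b < j then f (j.succAbove b) else 1)
      * (∏ a : Fin n, if j < j.succAbove a then - f (j.succAbove a) else 1)
    = (-1)^(n - (j:ℕ)) * ∏ b : Fin n, f (j.succAbove b) := by
  rw [← Finset.prod_mul_distrib]
  have h1 : ∀ b : Fin n,
      (if j.succAbove b < j then f (j.succAbove b) else 1)
        * (if j < j.succAbove b then - f (j.succAbove b) else 1)
      = (if (b:ℕ) < (j:ℕ) then (1:R) else -1) * f (j.succAbove b) := by
    intro b
    rcases lt_or_gt_of_ne (Fin.succAbove_ne j b) with h | h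
    · rw [if_pos h, if_neg (asymm h), if_pos ((succAbove_lt_iff_coe n j b).mp h)]
      ring
    · rw [if_neg (asymm h), if_pos h,
        if_neg (by rw [← succAbove_lt_iff_coe n j b]; exact asymm h)]
      ring
  rw [Finset.prod_congr rfl fun b _ => h1 b, Finset.prod_mul_distrib]
  congr 1
  rw [Finset.prod_ite, Finset.prod_const_one, one_mul, Finset.prod_const, card_not_lt]

theorem triangle_succ (n : ℕ) : (n+1)*n/2 = n*(n-1)/2 + n := by
  have h1 : (n+1)*n = n*(n-1) + 2*n := by
    cases n with
    | zero => rfl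
    | succ m => simp only [Nat.add_sub_cancel]; ring
  have h2 : 2 ∣ n*(n-1) := by
    cases n with
    | zero => simp
    | succ m => simpa [Nat.mul_comm] using (Nat.even_mul_succ_self m).two_dvd
  omega

theorem sign_arith (n : ℕ) (j : Fin (n+1)) :
    ((-1:ℂ))^(j:ℕ) * (-1)^(n*(n-1)/2) = (-1)^((n+1)*n/2) * (-1)^(n-(j:ℕ)) := by
  have hj : (j:ℕ) ≤ n := Fin.is_le j
  have e1 : (-1:ℂ)^(n-(j:ℕ)) * (-1)^(j:ℕ) = (-1)^n := pow_sub_mul_pow _ hj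
  have e3 : (-1:ℂ)^(n-(j:ℕ)) * (-1)^(n-(j:ℕ)) = 1 := by
    rw [← pow_add, ← two_mul, pow_mul]; norm_num
  have key : (-1:ℂ)^n * (-1)^(n-(j:ℕ)) = (-1)^(j:ℕ) := by
    calc (-1:ℂ)^n * (-1)^(n-(j:ℕ))
        = ((-1)^(n-(j:ℕ)) * (-1)^(j:ℕ)) * (-1)^(n-(j:ℕ)) := by rw [e1]
      _ = ((-1)^(n-(j:ℕ)) * (-1)^(n-(j:ℕ))) * (-1)^(j:ℕ) := by ring
      _ = (-1)^(j:ℕ) := by rw [e3, one_mul]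
  rw [triangle_succ, pow_add, ← key]
  ring

theorem prod_erase_eq_succAbove {M : Type*} [CommMonoid M] (n : ℕ) (j : Fin (n+1)) (g : Fin (n+1) → M) :
    ∏ x ∈ Finset.univ.erase j, g x = ∏ b : Fin n, g (j.succAbove b) := by
  have him : (Finset.univ : Finset (Fin n)).image j.succAbove = Finset.univ.erase j := by
    ext x
    simp only [Finset.mem_erase, Finset.mem_univ, and_true, Finset.mem_image]
    constructor
    · rintro ⟨m, -, rfl⟩
      exact Fin.succAbove_ne j m
    · intro hx
      obtain ⟨m, hm⟩ := Fin.exists_succAbove_eq hx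
      exact ⟨m, trivial, hm⟩
  rw [← him, Finset.prod_image (fun a _ b _ h => Fin.succAbove_right_injective h)]

theorem key : ∀ (n : ℕ) (q q' : ℂ) (z w : Fin n → ℂ),
    Function.Injective z → Function.Injective w → (∀ i j, z i ≠ w j) →
    Pf n q q' z w = (-1)^(n*(n-1)/2) * Df n z * Sf n q q' z w := by
  intro n
  induction n with
  | zero =>
    intro q q' z w _ _ _
    simp [Pf, Df, Sf, Nf, Gf, pmat, Matrix.det_fin_zero]
  | succ n IH =>
    intro q q' z w hz hw hzw
    have hz' : Function.Injective (fun i : Fin n => z i.succ) :=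
      fun a b h => Fin.succ_injective n (hz h)
    set z' : Fin n → ℂ := fun i => z i.succ with hz'def
    set Zp : Fin (n+1) → Polynomial ℂ :=
      Fin.cons Polynomial.X (fun i => Polynomial.C (z i.succ)) with hZp
    set Wp : Fin (n+1) → Polynomial ℂ := fun j => Polynomial.C (w j) with hWp
    set p : Polynomial ℂ := Pf (n+1) (Polynomial.C q) (Polynomial.C q') Zp Wp with hp
    set r : Polynomial ℂ :=
      (-1)^((n+1)*n/2) * Df (n+1) Zp * Sf (n+1) (Polynomial.C q) (Polynomial.C q') Zp Wp with hr
    have hevalZ : ∀ x : ℂ, (Polynomial.evalRingHom x) ∘ Zp = Fin.cons x z' := by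
      intro x
      funext k
      induction k using Fin.cases with
      | zero => simp [hZp]
      | succ k => simp [hZp, hz'def]
    have hevalW : ∀ x : ℂ, (Polynomial.evalRingHom x) ∘ Wp = w := by
      intro x; funext k; simp [hWp]
    have hevalp : ∀ x : ℂ, p.eval x = Pf (n+1) q q' (Fin.cons x z') w := by
      intro x
      have h := map_Pf (Polynomial.evalRingHom x) (n+1) (Polynomial.C q) (Polynomial.C q') Zp Wp
      rw [hevalZ x, hevalW x] at h
      simpa using h
    have hevalr : ∀ x : ℂ, r.eval x
        = (-1)^((n+1)*n/2) * Df (n+1) (Fin.cons x z') * Sf (n+1) q q' (Fin.cons x z') w := by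
      intro x
      have h1 := map_Df (Polynomial.evalRingHom x) (n+1) Zp
      have h2 := map_Sf (Polynomial.evalRingHom x) (n+1) (Polynomial.C q) (Polynomial.C q') Zp Wp
      rw [hevalZ x] at h1 h2
      rw [hevalW x] at h2
      simp only [Polynomial.eval_C, Polynomial.coe_evalRingHom, map_mul, map_pow, map_neg,
        map_one, Polynomial.eval_mul, Polynomial.eval_pow, Polynomial.eval_neg,
        Polynomial.eval_one] at h1 h2 ⊢
      rw [hr]
      simp only [Polynomial.eval_mul, Polynomial.eval_pow, Polynomial.eval_neg,
        Polynomial.eval_one]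
      rw [h1, h2]
    have hnodeW : ∀ j : Fin (n+1), Pf (n+1) q q' (Fin.cons (w j) z') w
        = (-1)^((n+1)*n/2) * Df (n+1) (Fin.cons (w j) z')
          * Sf (n+1) q q' (Fin.cons (w j) z') w := by
      intro j
      have hIH : Pf n q q' z' (w ∘ j.succAbove)
          = (-1)^(n*(n-1)/2) * Df n z' * Sf n q q' z' (w ∘ j.succAbove) := by
        refine IH q q' z' (w ∘ j.succAbove) hz' ?_ ?_
        · exact fun a b h => Fin.succAbove_right_injective (hw h)
        · exact fun i k => hzw i.succ (j.succAbove k)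
      rw [Pf_cons n q q' z' w j, Df_cons, Sf_cons, hIH]
      rw [prod_erase_eq_succAbove n j (fun j' => (w j - w j') * (q * w j - q' * w j'))]
      have hPB : (∏ a : Fin n, if j < j.succAbove a then q' * w (j.succAbove a) - q * w j else 1)
          = ∏ a : Fin n, if j < j.succAbove a
              then -((fun x => q * w j - q' * w x) (j.succAbove a)) else 1 := by
        apply Finset.prod_congr rfl
        intro a _
        simp [neg_sub]
      rw [hPB, pref_sign n j (fun x => q * w j - q' * w x)]
      simp only [Finset.prod_mul_distrib]
      have hsgn := sign_arith n j
      linear_combination ((∏ b : Fin n, (w j - w (j.succAbove b)))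
        * (∏ b : Fin n, (q * w j - q' * w (j.succAbove b)))
        * (∏ i : Fin n, (z' i - w j)) * (∏ i : Fin n, (q * z' i - q' * w j))
        * Df n z' * Sf n q q' z' (w ∘ j.succAbove)) * hsgn
    have hdegp : p.natDegree ≤ 2*n := by
      rw [hp, Pf, Matrix.det_apply']
      refine Polynomial.natDegree_sum_le_of_forall_le _ _ ?_
      intro σ _
      refine le_trans Polynomial.natDegree_mul_le ?_
      rw [Polynomial.natDegree_intCast, zero_add]
      refine le_trans (Polynomial.natDegree_prod_le _ _) ?_
      have hbound : ∀ i : Fin (n+1),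
          (pmat (n+1) (Polynomial.C q) (Polynomial.C q') Zp Wp (σ i) i).natDegree
            ≤ if σ i = 0 then 2*n else 0 := by
        intro i
        by_cases h : σ i = 0
        · rw [if_pos h, h]
          show (∏ j' ∈ Finset.univ.erase i,
              ((Zp 0 - Wp j') * (Polynomial.C q * Zp 0 - Polynomial.C q' * Wp j'))).natDegree ≤ 2*n
          refine le_trans (Polynomial.natDegree_prod_le _ _) ?_
          refine le_trans (Finset.sum_le_sum (g := fun _ => 2) ?_) ?_
          · intro j' _
            refine le_trans Polynomial.natDegree_mul_le ?_
            have d1 : (Zp 0 - Wp j').natDegree ≤ 1 := by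
              rw [hZp, hWp]
              simp only [Fin.cons_zero]
              exact le_of_eq (Polynomial.natDegree_X_sub_C _)
            have d2 : (Polynomial.C q * Zp 0 - Polynomial.C q' * Wp j').natDegree ≤ 1 := by
              refine le_trans (Polynomial.natDegree_sub_le _ _) ?_
              rw [hZp, hWp]
              simp only [Fin.cons_zero]
              refine max_le (le_trans (Polynomial.natDegree_C_mul_le _ _) ?_)
                (le_trans (Polynomial.natDegree_C_mul_le _ _) ?_)
              · exact le_of_eq Polynomial.natDegree_X
              · simp
            exact le_trans (add_le_add d1 d2) (by norm_num)
          · rw [Finset.sum_const, Finset.card_erase_of_mem (Finset.mem_univ i)]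
            simp [mul_comm]
        · rw [if_neg h]
          obtain ⟨m, hm⟩ := Fin.eq_succ_of_ne_zero h
          rw [hm]
          show (∏ j' ∈ Finset.univ.erase i,
              ((Zp m.succ - Wp j') * (Polynomial.C q * Zp m.succ - Polynomial.C q' * Wp j'))).natDegree ≤ 0
          refine le_trans (Polynomial.natDegree_prod_le _ _) ?_
          refine le_trans (Finset.sum_le_sum (g := fun _ => 0) ?_) (by simp)
          intro j' _
          refine le_trans Polynomial.natDegree_mul_le ?_
          have e1 : Zp m.succ - Wp j' = Polynomial.C (z m.succ - w j') := by
            rw [hZp, hWp]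
            simp only [Fin.cons_succ]
            rw [Polynomial.C_sub]
          have e2 : Polynomial.C q * Zp m.succ - Polynomial.C q' * Wp j'
              = Polynomial.C (q * z m.succ - q' * w j') := by
            rw [hZp, hWp]
            simp only [Fin.cons_succ]
            rw [Polynomial.C_sub, Polynomial.C_mul, Polynomial.C_mul]
          rw [e1, e2, Polynomial.natDegree_C, Polynomial.natDegree_C]
      refine le_trans (Finset.sum_le_sum (fun i _ => hbound i)) ?_
      have hcond : ∀ i : Fin (n+1), (if σ i = 0 then 2*n else 0) = if i = σ⁻¹ 0 then 2*n else 0 := by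
        intro i
        congr 1
        simp only [eq_iff_iff]
        constructor
        · intro h; rw [← h]; simp
        · intro h; rw [h]; simp
      rw [Finset.sum_congr rfl (fun i _ => hcond i), Finset.sum_ite_eq']
      simp
    have hdegDf : (Df (n+1) Zp).natDegree ≤ n := by
      rw [Df]
      refine le_trans (Polynomial.natDegree_prod_le _ _) ?_
      have hb : ∀ i : Fin (n+1),
          (∏ j, if j < i then Zp i - Zp j else 1).natDegree ≤ if i = 0 then 0 else 1 := by
        intro i
        induction i using Fin.cases with
        | zero =>
          rw [if_pos rfl]
          have h1 : (∏ j : Fin (n+1), if j < (0 : Fin (n+1)) then Zp 0 - Zp j else 1) = 1 :=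
            Finset.prod_eq_one fun j _ => if_neg (Fin.not_lt_zero _)
          rw [h1, Polynomial.natDegree_one]
        | succ i =>
          rw [if_neg (Fin.succ_ne_zero i)]
          refine le_trans (Polynomial.natDegree_prod_le _ _) ?_
          refine le_trans (Finset.sum_le_sum
            (g := fun j : Fin (n+1) => if j = 0 then 1 else 0) ?_) ?_
          · intro j _
            induction j using Fin.cases with
            | zero =>
              beta_reduce
              rw [if_pos rfl, if_pos (Fin.succ_pos i)]
              rw [hZp]
              simp only [Fin.cons_succ, Fin.cons_zero]
              refine le_trans (Polynomial.natDegree_sub_le _ _) ?_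
              simp
            | succ j =>
              beta_reduce
              rw [if_neg (Fin.succ_ne_zero j)]
              by_cases h : j.succ < i.succ
              · rw [if_pos h, hZp]
                simp only [Fin.cons_succ]
                rw [← Polynomial.C_sub, Polynomial.natDegree_C]
              · rw [if_neg h, Polynomial.natDegree_one]
          · rw [Fin.sum_univ_succ]
            simp [Fin.succ_ne_zero]
      refine le_trans (Finset.sum_le_sum (fun i _ => hb i)) ?_
      rw [Fin.sum_univ_succ]
      simp [Fin.succ_ne_zero]
    have hdegSf : (Sf (n+1) (Polynomial.C q) (Polynomial.C q') Zp Wp).natDegree ≤ n := by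
      rw [Sf]
      refine Polynomial.natDegree_sum_le_of_forall_le _ _ ?_
      intro σ _
      refine le_trans Polynomial.natDegree_mul_le ?_
      have hN : (Nf (n+1) (Polynomial.C q) (Polynomial.C q') Wp σ).natDegree = 0 := by
        have hh : Polynomial.C (Nf (n+1) q q' w σ)
            = Nf (n+1) (Polynomial.C q) (Polynomial.C q') Wp σ :=
          map_Nf (Polynomial.C : ℂ →+* Polynomial ℂ) (n+1) q q' w σ
        rw [← hh, Polynomial.natDegree_C]
      rw [hN, zero_add, Gf]
      refine le_trans Polynomial.natDegree_mul_le ?_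
      have hA : (∏ i : Fin (n+1), ∏ k : Fin (n+1),
          if k < i then Polynomial.C q * Zp i - Polynomial.C q' * Wp (σ k) else 1).natDegree
            ≤ 0 := by
        refine le_trans (Polynomial.natDegree_prod_le _ _) ?_
        refine le_trans (Finset.sum_le_sum (g := fun _ => 0) ?_) (by simp)
        intro i _
        refine le_trans (Polynomial.natDegree_prod_le _ _) ?_
        refine le_trans (Finset.sum_le_sum (g := fun _ => 0) ?_) (by simp)
        intro k _
        induction i using Fin.cases with
        | zero => rw [if_neg (Fin.not_lt_zero _), Polynomial.natDegree_one]
        | succ i =>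
          by_cases h : k < i.succ
          · rw [if_pos h, hZp, hWp]
            simp only [Fin.cons_succ]
            rw [← Polynomial.C_mul, ← Polynomial.C_mul, ← Polynomial.C_sub,
              Polynomial.natDegree_C]
          · rw [if_neg h, Polynomial.natDegree_one]
      have hB : (∏ i : Fin (n+1), ∏ k : Fin (n+1),
          if i < k then Zp i - Wp (σ k) else 1).natDegree ≤ n := by
        refine le_trans (Polynomial.natDegree_prod_le _ _) ?_
        refine le_trans (Finset.sum_le_sum
          (g := fun i : Fin (n+1) => if i = 0 then n else 0) ?_) ?_
        · intro i _
          induction i using Fin.cases with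
          | zero =>
            beta_reduce
            rw [if_pos rfl]
            refine le_trans (Polynomial.natDegree_prod_le _ _) ?_
            refine le_trans (Finset.sum_le_sum
              (g := fun k : Fin (n+1) => if k = 0 then 0 else 1) ?_) ?_
            · intro k _
              induction k using Fin.cases with
              | zero =>
                beta_reduce
                rw [if_pos rfl, if_neg (lt_irrefl _), Polynomial.natDegree_one]
              | succ k =>
                beta_reduce
                rw [if_neg (Fin.succ_ne_zero k), if_pos (Fin.succ_pos k), hZp, hWp]
                simp only [Fin.cons_zero]
                refine le_trans (Polynomial.natDegree_sub_le _ _) ?_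
                simp
            · rw [Fin.sum_univ_succ]
              simp [Fin.succ_ne_zero]
          | succ i =>
            beta_reduce
            rw [if_neg (Fin.succ_ne_zero i)]
            refine le_trans (Polynomial.natDegree_prod_le _ _) ?_
            refine le_trans (Finset.sum_le_sum (g := fun _ => 0) ?_) (by simp)
            intro k _
            by_cases h : i.succ < k
            · have hk0 : k ≠ 0 := by
                rintro rfl
                exact Fin.not_lt_zero _ h
              obtain ⟨m, hm⟩ := Fin.eq_succ_of_ne_zero hk0
              rw [if_pos h, hm, hZp, hWp]
              simp only [Fin.cons_succ]
              rw [← Polynomial.C_sub, Polynomial.natDegree_C]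
            · rw [if_neg h, Polynomial.natDegree_one]
        · rw [Fin.sum_univ_succ]
          simp [Fin.succ_ne_zero]
      omega
    have hdegr : r.natDegree ≤ 2*n := by
      have hC : ((-1 : Polynomial ℂ))^((n+1)*n/2) = Polynomial.C ((-1)^((n+1)*n/2)) := by
        rw [map_pow, map_neg, map_one]
      have h1 : ((-1 : Polynomial ℂ)^((n+1)*n/2) * Df (n+1) Zp).natDegree ≤ n := by
        refine le_trans Polynomial.natDegree_mul_le ?_
        rw [hC, Polynomial.natDegree_C]
        simpa using hdegDf
      rw [hr]
      refine le_trans Polynomial.natDegree_mul_le ?_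
      omega
    have hfinj : Function.Injective (Sum.elim z' w : Fin n ⊕ Fin (n+1) → ℂ) := by
      intro a b hab
      cases a with
      | inl a =>
        cases b with
        | inl b => exact congrArg Sum.inl (hz' hab)
        | inr b => exact absurd hab (hzw a.succ b)
      | inr a =>
        cases b with
        | inl b => exact absurd hab.symm (hzw b.succ a)
        | inr b => exact congrArg Sum.inr (hw hab)
    have hzero : p - r = 0 := by
      apply Polynomial.eq_zero_of_natDegree_lt_card_of_eval_eq_zero _ hfinj ?_ ?_
      · intro i
        cases i with
        | inl i =>
          rw [Polynomial.eval_sub, hevalp, hevalr]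
          simp only [Sum.elim_inl]
          have hPzero : Pf (n+1) q q' (Fin.cons (z' i) z') w = 0 := by
            rw [Pf]
            apply Matrix.det_zero_of_row_eq (i := (0 : Fin (n+1))) (j := i.succ)
              (Fin.succ_ne_zero i).symm
            funext k
            simp [pmat]
          have hDzero : Df (n+1) (Fin.cons (z' i) z') = 0 := by
            rw [Df_cons]
            exact mul_eq_zero_of_left
              (Finset.prod_eq_zero (Finset.mem_univ i) (sub_self (z' i))) _
          rw [hPzero, hDzero]
          ring
        | inr j =>
          rw [Polynomial.eval_sub, hevalp, hevalr]
          simp only [Sum.elim_inr]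
          rw [hnodeW j, sub_self]
      · have hcard : Fintype.card (Fin n ⊕ Fin (n+1)) = 2*n+1 := by
          simp [Fintype.card_sum]
          omega
        rw [hcard]
        have hd := le_trans (Polynomial.natDegree_sub_le p r) (max_le hdegp hdegr)
        omega
    have hpr : p = r := sub_eq_zero.mp hzero
    have hfinal := congrArg (Polynomial.eval (z 0)) hpr
    rw [hevalp, hevalr] at hfinal
    have hconsz : Fin.cons (z 0) z' = z := Fin.cons_self_tail z
    rw [hconsz] at hfinal
    simpa using hfinal

-- counting lemma
theorem card_lt_fin (n : ℕ) (i : Fin n) :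
    (Finset.univ.filter (fun j : Fin n => j < i)).card = (i : ℕ) := by
  have h : (Finset.univ.filter (fun j : Fin n => j < i)).card
      = ((Finset.range n).filter (fun b => b < (i:ℕ))).card := by
    refine Finset.card_bij (fun b _ => (b : ℕ)) ?_ ?_ ?_
    · intro b hb; simp at hb ⊢; omega
    · intro b1 _ b2 _ h; exact Fin.ext h
    · intro b hb
      simp at hb
      refine ⟨⟨b, hb.1⟩, by simp only [Finset.mem_filter, Finset.mem_univ, true_and, Fin.lt_def]; omega, rfl⟩
  rw [h]
  have h2 : (Finset.range n).filter (fun b => b < (i:ℕ)) = Finset.range (min (i:ℕ) n) := by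
    ext x; simp; omega
  rw [h2, Finset.card_range]
  have := i.isLt
  omega

theorem sign_count (n : ℕ) :
    (∏ i : Fin n, ∏ j : Fin n, if j < i then (-1:ℂ) else 1) = (-1)^(n*(n-1)/2) := by
  have h2 : ∀ i : Fin n, (∏ j : Fin n, if j < i then (-1:ℂ) else 1) = (-1)^(i:ℕ) := by
    intro i
    rw [Finset.prod_ite, Finset.prod_const, Finset.prod_const_one, mul_one, card_lt_fin]
  rw [Finset.prod_congr rfl fun i _ => h2 i, Finset.prod_pow_eq_pow_sum]
  congr 1
  rw [Fin.sum_univ_eq_sum_range (fun i => i) n]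
  have := Finset.sum_range_id_mul_two n
  omega

-- pair-product conversion
theorem pairprod (n : ℕ) (c : Fin n → Fin n → Prop) [∀ i j, Decidable (c i j)]
    (f : Fin n → Fin n → ℂ) :
    ∏ i, ∏ j, (if c i j then f i j else 1)
      = ∏ p ∈ Finset.univ.filter (fun p : Fin n × Fin n => c p.1 p.2), f p.1 p.2 := by
  rw [Finset.prod_filter]
  exact (Fintype.prod_prod_type (f := fun p : Fin n × Fin n => if c p.1 p.2 then f p.1 p.2 else 1)).symm

theorem hD (n : ℕ) (q : ℂ) (w : Fin n → ℂ)
    (hww : ∀ i j : Fin n, i ≠ j → q⁻¹ * w i - q * w j ≠ 0) (σ : Equiv.Perm (Fin n)) :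
    (∏ i, ∏ j, if j < i then (q⁻¹ * w i - q * w j) else 1) *
    (∏ i, ∏ j, if i < j ∧ σ j < σ i then
        (q * w (σ i) - q⁻¹ * w (σ j)) / (q⁻¹ * w (σ i) - q * w (σ j)) else 1)
    = Nf n q q⁻¹ w σ := by
  classical
  set X : Fin n × Fin n → ℂ := fun p => q * w p.1 - q⁻¹ * w p.2 with hX
  set Y : Fin n × Fin n → ℂ := fun p => q⁻¹ * w p.1 - q * w p.2 with hY
  set P : Finset (Fin n × Fin n) := Finset.univ.filter (fun p => p.2 < p.1) with hP
  set c : Fin n × Fin n → Prop := fun p => σ⁻¹ p.1 < σ⁻¹ p.2 with hc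
  have hNf : Nf n q q⁻¹ w σ
      = (∏ p ∈ P.filter c, X p) * (∏ p ∈ P.filter (fun p => ¬ c p), Y p) := by
    rw [Nf, pairprod n (fun a b => b < a) (fun a b =>
      if σ⁻¹ a < σ⁻¹ b then q * w a - q⁻¹ * w b else q⁻¹ * w a - q * w b)]
    rw [← hP]
    rw [Finset.prod_ite]
  have hNw0 : (∏ i, ∏ j, if j < i then (q⁻¹ * w i - q * w j) else 1)
      = (∏ p ∈ P.filter c, Y p) * (∏ p ∈ P.filter (fun p => ¬ c p), Y p) := by
    rw [pairprod n (fun a b => b < a) (fun a b => q⁻¹ * w a - q * w b), ← hP]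
    rw [Finset.prod_filter_mul_prod_filter_not]
  have hRat : (∏ i, ∏ j, if i < j ∧ σ j < σ i then
        (q * w (σ i) - q⁻¹ * w (σ j)) / (q⁻¹ * w (σ i) - q * w (σ j)) else 1)
      = (∏ p ∈ P.filter c, X p) / (∏ p ∈ P.filter c, Y p) := by
    rw [pairprod n (fun i j => i < j ∧ σ j < σ i) (fun i j =>
      (q * w (σ i) - q⁻¹ * w (σ j)) / (q⁻¹ * w (σ i) - q * w (σ j)))]
    rw [← Finset.prod_div_distrib]
    refine Finset.prod_nbij' (fun p => (σ p.1, σ p.2)) (fun p => (σ⁻¹ p.1, σ⁻¹ p.2))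
      ?_ ?_ ?_ ?_ ?_
    · intro p hp
      simp only [Finset.mem_filter, Finset.mem_univ, true_and, hP, hc] at hp ⊢
      simp only [Equiv.Perm.coe_inv, Equiv.symm_apply_apply]
      exact ⟨hp.2, hp.1⟩
    · intro p hp
      simp only [Finset.mem_filter, Finset.mem_univ, true_and, hP, hc] at hp ⊢
      simp only [Equiv.Perm.coe_inv, Equiv.apply_symm_apply]
      exact ⟨hp.2, hp.1⟩
    · intro p _; simp
    · intro p _; simp
    · intro p _
      simp [hX, hY]
  rw [hNf, hNw0, hRat]
  have hYne : (∏ p ∈ P.filter c, Y p) ≠ 0 := by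
    rw [Finset.prod_ne_zero_iff]
    intro p hp
    simp only [Finset.mem_filter, Finset.mem_univ, true_and, hP] at hp
    exact hww p.1 p.2 (ne_of_gt hp.1)
  field_simp

end AuxIz

/-- Izergin's determinant formula for the DWBC partition function of the
finite 6-vertex model agrees with the permutation-sum formula.  Here `z i`, `w j`
denote `z_{i+1}`, `w_{j+1}`. -/
theorem izergin_det_eq_perm_sum
    (n : ℕ) (hn : 1 ≤ n) (q : ℂ) (hq : q ≠ 0) (hq2 : q ^ 2 ≠ 1)
    (z w : Fin n → ℂ)
    (hz : ∀ i j : Fin n, i ≠ j → z i ≠ z j)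
    (hw : ∀ i j : Fin n, i ≠ j → w i ≠ w j)
    (hzw : ∀ i j : Fin n, z i - w j ≠ 0)
    (hqzw : ∀ i j : Fin n, q * z i - q⁻¹ * w j ≠ 0)
    (hww : ∀ i j : Fin n, i ≠ j → q⁻¹ * w i - q * w j ≠ 0) :
    (q - q⁻¹) ^ n * (∏ m, w m) *
      ((∏ i : Fin n, ∏ j : Fin n, (z i - w j) * (q * z i - q⁻¹ * w j)) /
        (∏ i : Fin n, ∏ j : Fin n, if j < i then (z i - z j) * (w j - w i) else 1)) *
      Matrix.det (Matrix.of fun i j : Fin n =>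
        1 / ((z i - w j) * (q * z i - q⁻¹ * w j))) =
    (q - q⁻¹) ^ n * (∏ m, w m) *
      (∏ i : Fin n, ∏ j : Fin n, if j < i then (q⁻¹ * w i - q * w j) / (w i - w j) else 1) *
      ∑ σ : Equiv.Perm (Fin n),
        (∏ i : Fin n, ∏ j : Fin n, if i < j ∧ σ j < σ i then
            (q * w (σ i) - q⁻¹ * w (σ j)) / (q⁻¹ * w (σ i) - q * w (σ j)) else 1) *
        (∏ i : Fin n, ∏ k : Fin n, if k < i then q * z i - q⁻¹ * w (σ k) else 1) *
        (∏ i : Fin n, ∏ k : Fin n, if i < k then z i - w (σ k) else 1) := by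
  classical
  have hzinj : Function.Injective z := fun a b h => by
    by_contra hne; exact hz a b hne h
  have hwinj : Function.Injective w := fun a b h => by
    by_contra hne; exact hw a b hne h
  have hzw' : ∀ i j : Fin n, z i ≠ w j := fun i j => sub_ne_zero.mp (hzw i j)
  have hkey := AuxIz.key n q q⁻¹ z w hzinj hwinj hzw'
  set pref : ℂ := (q - q⁻¹) ^ n * (∏ m, w m) with hpref
  set E1 : ℂ := ∏ i : Fin n, ∏ j : Fin n, (z i - w j) * (q * z i - q⁻¹ * w j) with hE1
  set M : Matrix (Fin n) (Fin n) ℂ :=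
    Matrix.of fun i j : Fin n => 1 / ((z i - w j) * (q * z i - q⁻¹ * w j)) with hM
  -- Step A : E1 * det M = AuxIz.Pf
  have hA : E1 * M.det = AuxIz.Pf n q q⁻¹ z w := by
    rw [AuxIz.Pf]
    have hpm : AuxIz.pmat n q q⁻¹ z w = Matrix.of (fun i j =>
        (∏ j', ((z i - w j') * (q * z i - q⁻¹ * w j'))) * M i j) := by
      funext i j
      simp only [AuxIz.pmat, Matrix.of_apply, hM, mul_one_div]
      rw [eq_div_iff (mul_ne_zero (hzw i j) (hqzw i j))]
      exact Finset.prod_erase_mul _ _ (Finset.mem_univ j)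
    rw [hpm, Matrix.det_mul_column]
  -- Step B : split the z/w Vandermonde product
  set Dw : ℂ := ∏ i : Fin n, ∏ j : Fin n, if j < i then (w j - w i) else 1 with hDw
  set Dw' : ℂ := ∏ i : Fin n, ∏ j : Fin n, if j < i then (w i - w j) else 1 with hDw'
  have hB : (∏ i : Fin n, ∏ j : Fin n, if j < i then (z i - z j) * (w j - w i) else 1)
      = AuxIz.Df n z * Dw := by
    rw [AuxIz.Df, hDw, ← Finset.prod_mul_distrib]
    apply Finset.prod_congr rfl
    intro i _
    rw [← Finset.prod_mul_distrib]
    apply Finset.prod_congr rfl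
    intro j _
    by_cases h : j < i <;> simp [h]
  -- Step C : Dw = sign * Dw'
  have hC : Dw = (-1)^(n*(n-1)/2) * Dw' := by
    rw [hDw, hDw', ← AuxIz.sign_count n, ← Finset.prod_mul_distrib]
    apply Finset.prod_congr rfl
    intro i _
    rw [← Finset.prod_mul_distrib]
    apply Finset.prod_congr rfl
    intro j _
    by_cases h : j < i <;> simp [h]
  -- split the ratio prefactor
  set Nw0 : ℂ := ∏ i : Fin n, ∏ j : Fin n, if j < i then (q⁻¹ * w i - q * w j) else 1 with hNw0
  have hPRD : (∏ i : Fin n, ∏ j : Fin n, if j < i then (q⁻¹ * w i - q * w j) / (w i - w j) else 1)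
      = Nw0 / Dw' := by
    rw [hNw0, hDw', ← Finset.prod_div_distrib]
    apply Finset.prod_congr rfl
    intro i _
    rw [← Finset.prod_div_distrib]
    apply Finset.prod_congr rfl
    intro j _
    by_cases h : j < i <;> simp [h]
  -- the sum
  have hsum : Nw0 * (∑ σ : Equiv.Perm (Fin n),
        (∏ i : Fin n, ∏ j : Fin n, if i < j ∧ σ j < σ i then
            (q * w (σ i) - q⁻¹ * w (σ j)) / (q⁻¹ * w (σ i) - q * w (σ j)) else 1) *
        (∏ i : Fin n, ∏ k : Fin n, if k < i then q * z i - q⁻¹ * w (σ k) else 1) *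
        (∏ i : Fin n, ∏ k : Fin n, if i < k then z i - w (σ k) else 1))
      = AuxIz.Sf n q q⁻¹ z w := by
    rw [Finset.mul_sum, AuxIz.Sf]
    apply Finset.sum_congr rfl
    intro σ _
    have := AuxIz.hD n q w hww σ
    rw [hNw0]
    calc (∏ i : Fin n, ∏ j : Fin n, if j < i then (q⁻¹ * w i - q * w j) else 1) *
          ((∏ i : Fin n, ∏ j : Fin n, if i < j ∧ σ j < σ i then
            (q * w (σ i) - q⁻¹ * w (σ j)) / (q⁻¹ * w (σ i) - q * w (σ j)) else 1) *
          (∏ i : Fin n, ∏ k : Fin n, if k < i then q * z i - q⁻¹ * w (σ k) else 1) *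
          (∏ i : Fin n, ∏ k : Fin n, if i < k then z i - w (σ k) else 1))
        = ((∏ i : Fin n, ∏ j : Fin n, if j < i then (q⁻¹ * w i - q * w j) else 1) *
          (∏ i : Fin n, ∏ j : Fin n, if i < j ∧ σ j < σ i then
            (q * w (σ i) - q⁻¹ * w (σ j)) / (q⁻¹ * w (σ i) - q * w (σ j)) else 1)) *
          ((∏ i : Fin n, ∏ k : Fin n, if k < i then q * z i - q⁻¹ * w (σ k) else 1) *
          (∏ i : Fin n, ∏ k : Fin n, if i < k then z i - w (σ k) else 1)) := by ring
      _ = AuxIz.Nf n q q⁻¹ w σ * AuxIz.Gf n q q⁻¹ z w σ := by rw [this, AuxIz.Gf]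
  -- nonvanishing
  have hDfne : AuxIz.Df n z ≠ 0 := by
    rw [AuxIz.Df, Finset.prod_ne_zero_iff]
    intro i _
    rw [Finset.prod_ne_zero_iff]
    intro j _
    by_cases h : j < i
    · rw [if_pos h]; exact sub_ne_zero.mpr (hz i j (ne_of_gt h))
    · rw [if_neg h]; exact one_ne_zero
  have hDw'ne : Dw' ≠ 0 := by
    rw [hDw', Finset.prod_ne_zero_iff]
    intro i _
    rw [Finset.prod_ne_zero_iff]
    intro j _
    by_cases h : j < i
    · rw [if_pos h]; exact sub_ne_zero.mpr (hw i j (ne_of_gt h))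
    · rw [if_neg h]; exact one_ne_zero
  have hNw0ne : Nw0 ≠ 0 := by
    rw [hNw0, Finset.prod_ne_zero_iff]
    intro i _
    rw [Finset.prod_ne_zero_iff]
    intro j _
    by_cases h : j < i
    · rw [if_pos h]; exact hww i j (ne_of_gt h)
    · rw [if_neg h]; exact one_ne_zero
  have hsgnne : ((-1:ℂ))^(n*(n-1)/2) ≠ 0 := pow_ne_zero _ (by norm_num)
  -- assemble
  rw [hB, hPRD]
  have hL : pref * (E1 / (AuxIz.Df n z * Dw)) * M.det = pref * ((E1 * M.det) / (AuxIz.Df n z * Dw)) := by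
    ring
  rw [hL, hA, hkey, hC]
  rw [← hsum] at *
  field_simp

end
end

section
/- Trigonometric degeneration of the SOS partition function: fix n ≥ 1, q ∈ ℂ with q ≠ 0 and q² ≠ 1, and z_1,…,z_n, w_1,…,w_n ∈ ℂ with the w_j pairwise distinct and q⁻¹w_i − qw_j ≠ 0 for all i ≠ j. Define for μ ∈ ℂ (with 1 − μq^{2(m−1)} ≠ 0 for m = 1,…,n) the trigonometric SOS DWBC partition function Z(μ) = ∏_{n≥k>m≥1} [(w_k q⁻¹ − w_m q)/(w_k − w_m)] · Σ_{σ∈S_n} ( ∏_{l<l′ with σ(l)>σ(l′)} [(w_{σ(l)}q − w_{σ(l′)}q⁻¹)/(w_{σ(l)}q⁻¹ − w_{σ(l′)}q)] · ∏_{n≥k>m≥1} (z_k q − w_{σ(m)} q⁻¹) · ∏_{1≤k<m≤n} (z_k − w_{σ(m)}) · ∏_{m=1}^n [(z_m − w_{σ(m)} μ q^{2(m−1)})(q−q⁻¹)/(1 − μ q^{2(m−1)})] ). Then as ‖μ‖ → ∞, Z(μ) tends to (q−q⁻¹)^n ∏_{m=1}^n w_m · ∏_{n≥i>j≥1} [(q⁻¹w_i−qw_j)/(w_i−w_j)]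 · Σ_{σ∈S_n} ( ∏_{i<j with σ(i)>σ(j)} [(qw_{σ(i)}−q⁻¹w_{σ(j)})/(q⁻¹w_{σ(i)}−qw_{σ(j)})] · ∏_{n≥i>k≥1} (qz_i−q⁻¹w_{σ(k)}) · ∏_{1≤i<k≤n} (z_i−w_{σ(k)}) ). -/
open Complex BigOperators

noncomputable section

private lemma key_aux (q : ℂ) (hq : q ≠ 0) (zz cc aa : ℂ) (ha : aa ≠ 0) :
    Filter.Tendsto (fun μ : ℂ => (zz - cc * μ * aa) * (q - q⁻¹) / (1 - μ * aa))
      (Bornology.cobounded ℂ) (nhds (cc * (q - q⁻¹))) := by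
  have hne : (0 : ℂ) - aa ≠ 0 := by simpa using ha
  have hnum : Filter.Tendsto (fun t : ℂ => (zz * t - cc * aa) * (q - q⁻¹)) (nhds 0)
      (nhds ((zz * 0 - cc * aa) * (q - q⁻¹))) := by
    exact Continuous.tendsto (by continuity) 0
  have hden : Filter.Tendsto (fun t : ℂ => t - aa) (nhds 0) (nhds (0 - aa)) := by
    exact Continuous.tendsto (by continuity) 0
  have h0 : Filter.Tendsto (fun t : ℂ => (zz * t - cc * aa) * (q - q⁻¹) / (t - aa))
      (nhds 0) (nhds (cc * (q - q⁻¹))) := by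
    have h : Filter.Tendsto (fun t : ℂ => (zz * t - cc * aa) * (q - q⁻¹) / (t - aa)) (nhds 0)
        (nhds ((zz * 0 - cc * aa) * (q - q⁻¹) / (0 - aa))) := hnum.div hden hne
    convert h using 2
    field_simp
    ring
  have h := h0.comp Filter.tendsto_inv₀_cobounded
  refine h.congr' ?_
  filter_upwards [Bornology.eventually_ne_cobounded (0 : ℂ)] with μ hμ
  show (zz * μ⁻¹ - cc * aa) * (q - q⁻¹) / (μ⁻¹ - aa) = _
  rw [show (zz - cc * μ * aa) * (q - q⁻¹) = μ * ((zz * μ⁻¹ - cc * aa) * (q - q⁻¹)) by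
      field_simp,
    show (1 : ℂ) - μ * aa = μ * (μ⁻¹ - aa) by field_simp]
  exact (mul_div_mul_left _ _ hμ).symm

/-- as `‖μ‖ → ∞`, the DWBC partition function of the trigonometric SOS
model tends to the permutation-sum formula for the 6-vertex DWBC partition function.
Here `z i`, `w j` denote `z_{i+1}`, `w_{j+1}`, and for `m : Fin n` the paper's
exponent `2(m-1)` reads `2·(m : ℕ)`. -/
theorem trigSOS_tendsto_sixVertex
    (n : ℕ) (hn : 1 ≤ n) (q : ℂ) (hq : q ≠ 0) (hq2 : q ^ 2 ≠ 1)
    (z w : Fin n → ℂ)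
    (hw : ∀ i j : Fin n, i ≠ j → w i ≠ w j)
    (hww : ∀ i j : Fin n, i ≠ j → q⁻¹ * w i - q * w j ≠ 0) :
    Filter.Tendsto (fun μ : ℂ =>
      (∏ k : Fin n, ∏ m : Fin n, if m < k then (w k * q⁻¹ - w m * q) / (w k - w m) else 1) *
      ∑ σ : Equiv.Perm (Fin n),
        (∏ l : Fin n, ∏ l' : Fin n, if l < l' ∧ σ l' < σ l then
            (w (σ l) * q - w (σ l') * q⁻¹) / (w (σ l) * q⁻¹ - w (σ l') * q) else 1) *
        (∏ k : Fin n, ∏ m : Fin n, if m < k then z k * q - w (σ m) * q⁻¹ else 1) *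
        (∏ k : Fin n, ∏ m : Fin n, if k < m then z k - w (σ m) else 1) *
        (∏ m : Fin n, (z m - w (σ m) * μ * q ^ (2 * (m : ℕ))) * (q - q⁻¹) /
            (1 - μ * q ^ (2 * (m : ℕ)))))
      (Bornology.cobounded ℂ)
      (nhds ((q - q⁻¹) ^ n * (∏ m, w m) *
        (∏ i : Fin n, ∏ j : Fin n, if j < i then (q⁻¹ * w i - q * w j) / (w i - w j) else 1) *
        ∑ σ : Equiv.Perm (Fin n),
          (∏ i : Fin n, ∏ j : Fin n, if i < j ∧ σ j < σ i then
              (q * w (σ i) - q⁻¹ * w (σ j)) / (q⁻¹ * w (σ i) - q * w (σ j)) else 1) *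
          (∏ i : Fin n, ∏ k : Fin n, if k < i then q * z i - q⁻¹ * w (σ k) else 1) *
          (∏ i : Fin n, ∏ k : Fin n, if i < k then z i - w (σ k) else 1))) := by
  -- per-σ limit of the μ-dependent product
  have hprod : ∀ σ : Equiv.Perm (Fin n),
      Filter.Tendsto (fun μ : ℂ => ∏ m : Fin n,
        (z m - w (σ m) * μ * q ^ (2 * (m : ℕ))) * (q - q⁻¹) / (1 - μ * q ^ (2 * (m : ℕ))))
      (Bornology.cobounded ℂ) (nhds (∏ m : Fin n, w (σ m) * (q - q⁻¹))) := by
    intro σ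
    exact tendsto_finset_prod _ fun m _ =>
      key_aux q hq (z m) (w (σ m)) _ (pow_ne_zero _ hq)
  have H : Filter.Tendsto (fun μ : ℂ =>
      (∏ k : Fin n, ∏ m : Fin n, if m < k then (w k * q⁻¹ - w m * q) / (w k - w m) else 1) *
      ∑ σ : Equiv.Perm (Fin n),
        (∏ l : Fin n, ∏ l' : Fin n, if l < l' ∧ σ l' < σ l then
            (w (σ l) * q - w (σ l') * q⁻¹) / (w (σ l) * q⁻¹ - w (σ l') * q) else 1) *
        (∏ k : Fin n, ∏ m : Fin n, if m < k then z k * q - w (σ m) * q⁻¹ else 1) *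
        (∏ k : Fin n, ∏ m : Fin n, if k < m then z k - w (σ m) else 1) *
        (∏ m : Fin n, (z m - w (σ m) * μ * q ^ (2 * (m : ℕ))) * (q - q⁻¹) /
            (1 - μ * q ^ (2 * (m : ℕ)))))
      (Bornology.cobounded ℂ)
      (nhds ((∏ k : Fin n, ∏ m : Fin n, if m < k then (w k * q⁻¹ - w m * q) / (w k - w m) else 1) *
      ∑ σ : Equiv.Perm (Fin n),
        (∏ l : Fin n, ∏ l' : Fin n, if l < l' ∧ σ l' < σ l then
            (w (σ l) * q - w (σ l') * q⁻¹) / (w (σ l) * q⁻¹ - w (σ l') * q) else 1) *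
        (∏ k : Fin n, ∏ m : Fin n, if m < k then z k * q - w (σ m) * q⁻¹ else 1) *
        (∏ k : Fin n, ∏ m : Fin n, if k < m then z k - w (σ m) else 1) *
        (∏ m : Fin n, w (σ m) * (q - q⁻¹)))) := by
    exact Filter.Tendsto.const_mul _ (tendsto_finset_sum _ fun σ _ =>
      Filter.Tendsto.const_mul _ (hprod σ))
  convert H using 2
  -- now an algebraic identity between the two limit values
  have hC : (∏ i : Fin n, ∏ j : Fin n,
        if j < i then (q⁻¹ * w i - q * w j) / (w i - w j) else 1)
      = ∏ k : Fin n, ∏ m : Fin n,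
        if m < k then (w k * q⁻¹ - w m * q) / (w k - w m) else 1 := by
    refine Finset.prod_congr rfl fun k _ => Finset.prod_congr rfl fun m _ => ?_
    split_ifs with h
    · ring
    · rfl
  have hterm : ∀ σ : Equiv.Perm (Fin n),
      (∏ l : Fin n, ∏ l' : Fin n, if l < l' ∧ σ l' < σ l then
          (w (σ l) * q - w (σ l') * q⁻¹) / (w (σ l) * q⁻¹ - w (σ l') * q) else 1) *
      (∏ k : Fin n, ∏ m : Fin n, if m < k then z k * q - w (σ m) * q⁻¹ else 1) *
      (∏ k : Fin n, ∏ m : Fin n, if k < m then z k - w (σ m) else 1) *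
      (∏ m : Fin n, w (σ m) * (q - q⁻¹)) =
      ((∏ i : Fin n, ∏ j : Fin n, if i < j ∧ σ j < σ i then
          (q * w (σ i) - q⁻¹ * w (σ j)) / (q⁻¹ * w (σ i) - q * w (σ j)) else 1) *
      (∏ i : Fin n, ∏ k : Fin n, if k < i then q * z i - q⁻¹ * w (σ k) else 1) *
      (∏ i : Fin n, ∏ k : Fin n, if i < k then z i - w (σ k) else 1)) *
      ((∏ m, w m) * (q - q⁻¹) ^ n) := by
    intro σ
    have hA : (∏ l : Fin n, ∏ l' : Fin n, if l < l' ∧ σ l' < σ l then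
          (w (σ l) * q - w (σ l') * q⁻¹) / (w (σ l) * q⁻¹ - w (σ l') * q) else 1)
        = ∏ i : Fin n, ∏ j : Fin n, if i < j ∧ σ j < σ i then
          (q * w (σ i) - q⁻¹ * w (σ j)) / (q⁻¹ * w (σ i) - q * w (σ j)) else 1 := by
      refine Finset.prod_congr rfl fun l _ => Finset.prod_congr rfl fun l' _ => ?_
      split_ifs with h
      · ring
      · rfl
    have hB : (∏ k : Fin n, ∏ m : Fin n, if m < k then z k * q - w (σ m) * q⁻¹ else 1)
        = ∏ i : Fin n, ∏ k : Fin n, if k < i then q * z i - q⁻¹ * w (σ k) else 1 := by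
      refine Finset.prod_congr rfl fun k _ => Finset.prod_congr rfl fun m _ => ?_
      split_ifs with h
      · ring
      · rfl
    have hP : (∏ m : Fin n, w (σ m) * (q - q⁻¹)) = (∏ m, w m) * (q - q⁻¹) ^ n := by
      rw [Finset.prod_mul_distrib, Equiv.prod_comp σ w, Finset.prod_const,
        Finset.card_univ, Fintype.card_fin]
    rw [hA, hB, hP]
  rw [Finset.sum_congr rfl fun σ _ => hterm σ, ← Finset.sum_mul, hC]
  ring

end
end
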